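/- arXiv:1408.6070 — 5 statements merged into one kernel-verified Lean document; each statement's English description precedes it below -/
import Mathlib

section
/- Suppose P is two-sided and directionally atomless, that b⁺ ≥ (a⁺)² and b⁻ ≥ (a⁻)², and that (ρ'+a⁺, ρ'+a⁻) ≠ (0,0). Then F⁺ is coercive: for every M ∈ ℝ there exists R > 0 such that ‖K‖ ≥ R implies F⁺(K) ≥ M; i.e., F⁺(K) → +∞ as ‖K‖ → +∞ (Euclidean norm). -/
/-!
Let `X = s + P'K` and `Y_K = twoSlope (ρ' + a⁺) (ρ' + a⁻) X`, the piecewise linear function of `X`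
with slope `ρ' + a⁺` on `[0, ∞)` and `ρ' + a⁻` on `(-∞, 0]`. Since `b± ≥ (a±)²`, pointwise
`Y_K² ≤ ρ'²X² + (2ρ'a± + b±)X²` on the two half-lines, and taking expectations gives
`F⁺(K) ≥ Var Y_K − γ⁺ E[Y_K]`. By positive homogeneity of `twoSlope`, with `r = ‖K‖`,
`Var Y_K = r² Var twoSlope(s/r + P'(K/r))`. The function `(t, L) ↦ Var twoSlope(t + P'L)` is
continuous, and at `t = 0` it is positive on the unit sphere: a vanishing variance would make
`P'L` constant on `{P'L > 0}` or on `{P'L < 0}`, which is impossible for a two-sided atomless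
variable. By compactness it is bounded below by some `c > 0` for `|t|` small, so
`Var Y_K ≥ c r²`, while `|E[Y_K]|` grows at most linearly in `r`.
-/

open MeasureTheory

/-- The function `F⁺` from the paper, written with expectations as Bochner integrals.
Here `K'(E[PP'] − E[P]E[P'])K = E[⟪P,K⟫²] − (E[⟪P,K⟫])²` and `E[P']K = E[⟪P,K⟫]`. -/
noncomputable def Fplus {Ω : Type*} [MeasurableSpace Ω] (ℙ : Measure Ω) {n : ℕ}
    (P : Ω → EuclideanSpace ℝ (Fin n)) (s ρ' γp ap am bp bm : ℝ)
    (K : EuclideanSpace ℝ (Fin n)) : ℝ :=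
  let pk : Ω → ℝ := fun ω => inner ℝ (P ω) K
  let A : ℝ :=
    (∫ ω, ap * (s + pk ω) * (if 0 ≤ s + pk ω then (1:ℝ) else 0) ∂ℙ) +
    (∫ ω, am * (s + pk ω) * (if s + pk ω < 0 then (1:ℝ) else 0) ∂ℙ)
  ρ' ^ 2 * ((∫ ω, (pk ω) ^ 2 ∂ℙ) - (∫ ω, pk ω ∂ℙ) ^ 2) +
  (∫ ω, (2 * ρ' * ap + bp) * (s + pk ω) ^ 2 * (if 0 ≤ s + pk ω then (1:ℝ) else 0) ∂ℙ) +
  (∫ ω, (2 * ρ' * am + bm) * (s + pk ω) ^ 2 * (if s + pk ω < 0 then (1:ℝ) else 0) ∂ℙ) -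
  A ^ 2 - 2 * ρ' * A * (s + ∫ ω, pk ω ∂ℙ) - γp * A -
  ρ' * γp * (s + ∫ ω, pk ω ∂ℙ)

open Filter Topology

noncomputable def twoSlope (α β x : ℝ) : ℝ := α * max x 0 + β * min x 0

section TwoSlope

variable {α β x : ℝ}

lemma twoSlope_of_nonneg (hx : 0 ≤ x) : twoSlope α β x = α * x := by
  simp [twoSlope, hx]

lemma twoSlope_of_neg (hx : x < 0) : twoSlope α β x = β * x := by
  simp [twoSlope, hx.le]

lemma twoSlope_eq_ite (α β x : ℝ) :
    twoSlope α β x = α * x * (if 0 ≤ x then 1 else 0) + β * x * (if x < 0 then 1 else 0) := by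
  rcases le_or_gt 0 x with hx | hx
  · simp [twoSlope_of_nonneg hx, hx, not_lt.2 hx]
  · simp [twoSlope_of_neg hx, hx, not_le.2 hx]

lemma twoSlope_add_left (ρ α β x : ℝ) :
    twoSlope (ρ + α) (ρ + β) x = ρ * x + twoSlope α β x := by
  rcases le_or_gt 0 x with hx | hx
  · simp only [twoSlope_of_nonneg hx]; ring
  · simp only [twoSlope_of_neg hx]; ring

lemma twoSlope_mul {r : ℝ} (hr : 0 ≤ r) (α β x : ℝ) :
    twoSlope α β (r * x) = r * twoSlope α β x := by
  rcases le_or_gt 0 x with hx | hx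
  · rw [twoSlope_of_nonneg hx, twoSlope_of_nonneg (mul_nonneg hr hx)]; ring
  · rcases hr.eq_or_lt with rfl | hr
    · simp [twoSlope]
    · rw [twoSlope_of_neg hx, twoSlope_of_neg (mul_neg_of_pos_of_neg hr hx)]; ring

@[fun_prop]
lemma continuous_twoSlope (α β : ℝ) : Continuous (twoSlope α β) := by
  unfold twoSlope; fun_prop

lemma abs_twoSlope_le (α β x : ℝ) : |twoSlope α β x| ≤ (|α| + |β|) * |x| := by
  rcases le_or_gt 0 x with hx | hx
  · rw [twoSlope_of_nonneg hx, abs_mul]; nlinarith [abs_nonneg β, abs_nonneg x]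
  · rw [twoSlope_of_neg hx, abs_mul]; nlinarith [abs_nonneg α, abs_nonneg x]

lemma sq_twoSlope_add_le {ρ a a' b b' : ℝ} (hb : a ^ 2 ≤ b) (hb' : a' ^ 2 ≤ b') (x : ℝ) :
    twoSlope (ρ + a) (ρ + a') x ^ 2 ≤ ρ ^ 2 * x ^ 2 +
      ((2 * ρ * a + b) * x ^ 2 * (if 0 ≤ x then 1 else 0) +
        (2 * ρ * a' + b') * x ^ 2 * (if x < 0 then 1 else 0)) := by
  rcases le_or_gt 0 x with hx | hx
  · simp only [twoSlope_of_nonneg hx, hx, not_lt.2 hx, if_true, if_false]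
    nlinarith [mul_le_mul_of_nonneg_right hb (sq_nonneg x)]
  · simp only [twoSlope_of_neg hx, hx, not_le.2 hx, if_true, if_false]
    nlinarith [mul_le_mul_of_nonneg_right hb' (sq_nonneg x)]

end TwoSlope

lemma abs_le_one_add_sq (x : ℝ) : |x| ≤ 1 + x ^ 2 := by
  nlinarith [sq_abs x, sq_nonneg (|x| - 1)]

lemma exists_forall_le_quadratic {c : ℝ} (hc : 0 < c) (a b M : ℝ) :
    ∃ R, ∀ r ≥ R, M ≤ c * r ^ 2 - a * r - b := by
  refine ⟨max 1 ((|a| + |b| + |M|) / c), fun r hr => ?_⟩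
  have hr1 : 1 ≤ r := le_of_max_le_left hr
  have hcr : |a| + |b| + |M| ≤ c * r := (div_le_iff₀' hc).1 (le_of_max_le_right hr)
  linarith [mul_le_mul_of_nonneg_right hcr (by linarith : (0 : ℝ) ≤ r),
    mul_le_mul_of_nonneg_right (le_abs_self a) (by linarith : (0 : ℝ) ≤ r),
    mul_nonneg (add_nonneg (abs_nonneg b) (abs_nonneg M)) (by linarith : (0 : ℝ) ≤ r - 1),
    le_abs_self M, le_abs_self b]

lemma IsCompact.exists_pos_forall_le_of_pos_at_zero {Y : Type*} [TopologicalSpace Y] {K : Set Y}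
    (hK : IsCompact K) {f : ℝ × Y → ℝ} (hf : Continuous f) (hpos : ∀ y ∈ K, 0 < f (0, y)) :
    ∃ δ > 0, ∃ c > 0, ∀ t, |t| < δ → ∀ y ∈ K, c ≤ f (t, y) := by
  obtain ⟨c, hc, hcK⟩ :=
    hK.exists_forall_le' (by fun_prop : Continuous fun y => f (0, y)).continuousOn hpos
  have hnear : ∀ᶠ t in 𝓝 (0 : ℝ), ∀ y ∈ K, c / 2 < f (t, y) :=
    hK.eventually_forall_of_forall_eventually fun y hy =>
      (hf.tendsto (0, y)).eventually_const_lt (by linarith [hcK y hy])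
  obtain ⟨δ, hδ, h⟩ := Metric.eventually_nhds_iff.1 hnear
  exact ⟨δ, hδ, c / 2, half_pos hc, fun t ht y hy =>
    (h (by rwa [Real.dist_0_eq_abs]) y hy).le⟩

section Integrals

variable {Ω : Type*} [MeasurableSpace Ω] {μ : Measure Ω} {X : Ω → ℝ}

lemma MeasureTheory.MemLp.twoSlope_comp {p : ENNReal} (hX : MemLp X p μ) (α β : ℝ) :
    MemLp (fun ω => twoSlope α β (X ω)) p μ :=
  hX.of_le_mul (c := |α| + |β|)
    ((continuous_twoSlope α β).comp_aestronglyMeasurable hX.1)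
    (Eventually.of_forall fun ω => abs_twoSlope_le α β (X ω))

lemma MeasureTheory.Integrable.mul_ite_comp {f : Ω → ℝ} (hf : Integrable f μ)
    (hX : AEMeasurable X μ) {p : ℝ → Prop} [DecidablePred p] (hp : MeasurableSet {x | p x}) :
    Integrable (fun ω => f ω * if p (X ω) then 1 else 0) μ :=
  hf.mul_bdd (c := 1)
    ((measurable_const.ite hp measurable_const).comp_aemeasurable hX).aestronglyMeasurable
    (Eventually.of_forall fun ω => by split_ifs <;> simp)

lemma integral_twoSlope (hX : Integrable X μ) (α β : ℝ) :
    ∫ ω, twoSlope α β (X ω) ∂μ =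
      (∫ ω, α * X ω * (if 0 ≤ X ω then 1 else 0) ∂μ) +
        ∫ ω, β * X ω * (if X ω < 0 then 1 else 0) ∂μ := by
  simp_rw [twoSlope_eq_ite]
  exact integral_add
    ((hX.const_mul α).mul_ite_comp hX.aemeasurable (p := (0 ≤ ·)) measurableSet_Ici)
    ((hX.const_mul β).mul_ite_comp hX.aemeasurable (p := (· < 0)) measurableSet_Iio)

lemma integral_sq_twoSlope_add_le (hX : MemLp X 2 μ) {ρ a a' b b' : ℝ} (hb : a ^ 2 ≤ b)
    (hb' : a' ^ 2 ≤ b') :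
    ∫ ω, twoSlope (ρ + a) (ρ + a') (X ω) ^ 2 ∂μ ≤ ρ ^ 2 * (∫ ω, X ω ^ 2 ∂μ) +
      ((∫ ω, (2 * ρ * a + b) * X ω ^ 2 * (if 0 ≤ X ω then 1 else 0) ∂μ) +
        ∫ ω, (2 * ρ * a' + b') * X ω ^ 2 * (if X ω < 0 then 1 else 0) ∂μ) := by
  have hX2 := hX.integrable_sq
  have hpos := (hX2.const_mul (2 * ρ * a + b)).mul_ite_comp hX.aemeasurable
    (p := (0 ≤ ·)) measurableSet_Ici
  have hneg := (hX2.const_mul (2 * ρ * a' + b')).mul_ite_comp hX.aemeasurable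
    (p := (· < 0)) measurableSet_Iio
  calc ∫ ω, twoSlope (ρ + a) (ρ + a') (X ω) ^ 2 ∂μ
      ≤ ∫ ω, ρ ^ 2 * X ω ^ 2 + ((2 * ρ * a + b) * X ω ^ 2 * (if 0 ≤ X ω then 1 else 0) +
          (2 * ρ * a' + b') * X ω ^ 2 * (if X ω < 0 then 1 else 0)) ∂μ :=
        integral_mono (hX.twoSlope_comp _ _).integrable_sq ((hX2.const_mul _).add (hpos.add hneg))
          fun ω => sq_twoSlope_add_le hb hb' (X ω)
    _ = _ := by
        rw [integral_add (hX2.const_mul _) (hpos.fun_add hneg), integral_add hpos hneg,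
          integral_const_mul]

end Integrals

section Probability

open ProbabilityTheory

variable {Ω : Type*} [MeasurableSpace Ω] {μ : Measure Ω}

lemma variance_sub_le_Fplus [IsProbabilityMeasure μ] {n : ℕ} {P : Ω → EuclideanSpace ℝ (Fin n)}
    (hP : MemLp P 2 μ) {s ρ' γp ap am bp bm : ℝ} (hbp : ap ^ 2 ≤ bp) (hbm : am ^ 2 ≤ bm)
    (K : EuclideanSpace ℝ (Fin n)) :
    Var[fun ω => twoSlope (ρ' + ap) (ρ' + am) (s + inner ℝ (P ω) K); μ] -
        γp * ∫ ω, twoSlope (ρ' + ap) (ρ' + am) (s + inner ℝ (P ω) K) ∂μ ≤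
      Fplus μ P s ρ' γp ap am bp bm K := by
  have hZ : MemLp (fun ω => inner ℝ (P ω) K) 2 μ := hP.inner_const K
  have hX : MemLp (fun ω => s + inner ℝ (P ω) K) 2 μ := (memLp_const s).add hZ
  have hXi := hX.integrable one_le_two
  have hEX : ∫ ω, s + inner ℝ (P ω) K ∂μ = s + ∫ ω, inner ℝ (P ω) K ∂μ := by
    rw [integral_add (integrable_const s) (hZ.integrable one_le_two)]; simp
  have hEX2 : ∫ ω, (s + inner ℝ (P ω) K) ^ 2 ∂μ = (s + ∫ ω, inner ℝ (P ω) K ∂μ) ^ 2 +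
      (∫ ω, (inner ℝ (P ω) K) ^ 2 ∂μ - (∫ ω, inner ℝ (P ω) K ∂μ) ^ 2) := by
    have h := variance_const_add hZ.1 (μ := μ) s
    rw [variance_eq_sub hX, variance_eq_sub hZ, hEX] at h
    simp only [Pi.pow_apply] at h
    linarith
  have hEY : ∫ ω, twoSlope (ρ' + ap) (ρ' + am) (s + inner ℝ (P ω) K) ∂μ =
      ρ' * ∫ ω, s + inner ℝ (P ω) K ∂μ + ∫ ω, twoSlope ap am (s + inner ℝ (P ω) K) ∂μ := by
    simp_rw [twoSlope_add_left]
    rw [integral_add (hXi.const_mul ρ') ((hX.twoSlope_comp ap am).integrable one_le_two),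
      integral_const_mul]
  have hEY2 := integral_sq_twoSlope_add_le hX (ρ := ρ') hbp hbm
  rw [hEX2] at hEY2
  rw [variance_eq_sub (hX.twoSlope_comp _ _), hEY, hEX, integral_twoSlope hXi]
  simp only [Fplus, Pi.pow_apply]
  linear_combination hEY2

lemma variance_twoSlope_pos [IsFiniteMeasure μ] {Z : Ω → ℝ} (hZ : MemLp Z 2 μ) {α β : ℝ}
    (hαβ : α ≠ 0 ∨ β ≠ 0)
    (hpos : 0 < μ {ω | 0 < Z ω}) (hneg : 0 < μ {ω | Z ω < 0})
    (hatom : ∀ c : ℝ, μ {ω | Z ω = c} = 0) :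
    0 < Var[fun ω => twoSlope α β (Z ω); μ] := by
  refine (variance_nonneg _ _).lt_of_ne fun hvar => ?_
  set m := ∫ ω, twoSlope α β (Z ω) ∂μ
  have hconst : μ {ω | twoSlope α β (Z ω) ≠ m} = 0 :=
    ae_iff.1 (ae_eq_integral_of_variance_eq_zero (hZ.twoSlope_comp α β) hvar.symm)
  have hnull : ∀ (S : Set Ω) (γ : ℝ), γ ≠ 0 → (∀ ω ∈ S, twoSlope α β (Z ω) = γ * Z ω) →
      μ S = 0 := by
    intro S γ hγ hS
    refine measure_mono_null (fun ω hω => ?_) (measure_union_null hconst (hatom (m / γ)))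
    by_cases h : twoSlope α β (Z ω) = m
    · right
      show Z ω = m / γ
      rw [eq_div_iff hγ, mul_comm, ← hS ω hω, h]
    · exact Or.inl h
  rcases hαβ with hα | hβ
  · exact hpos.ne' (hnull _ α hα fun ω hω => twoSlope_of_nonneg (le_of_lt hω))
  · exact hneg.ne' (hnull _ β hβ fun ω hω => twoSlope_of_neg hω)

variable {E : Type*} [NormedAddCommGroup E] [InnerProductSpace ℝ E] {P : Ω → E}

lemma continuous_integral_comp_add_inner [IsFiniteMeasure μ] (hP : MemLp P 2 μ) {g : ℝ → ℝ}
    (hg : Continuous g) {C : ℝ} (hgC : ∀ x, |g x| ≤ C * (1 + x ^ 2)) :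
    Continuous fun p : ℝ × E => ∫ ω, g (p.1 + inner ℝ (P ω) p.2) ∂μ := by
  have hC : 0 ≤ C := by simpa using (abs_nonneg _).trans (hgC 0)
  refine continuous_iff_continuousAt.2 fun p₀ => ?_
  set R := ‖p₀‖ + 1
  refine continuousAt_of_dominated
    (bound := fun ω => C * (1 + 2 * R ^ 2) + C * (2 * R ^ 2) * ‖P ω‖ ^ 2)
    (Eventually.of_forall fun p => hg.comp_aestronglyMeasurable
      (aestronglyMeasurable_const.add (hP.inner_const p.2).1)) ?_
    ((integrable_const _).add (hP.norm.integrable_sq.const_mul _))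
    (Eventually.of_forall fun ω =>
      (hg.comp (continuous_fst.add (continuous_const.inner continuous_snd))).continuousAt)
  filter_upwards [Metric.ball_mem_nhds p₀ one_pos] with p hp
  refine Eventually.of_forall fun ω => ?_
  have hpR : ‖p‖ ≤ R := (norm_lt_of_mem_ball hp).le
  have ht : |p.1| ≤ R := (norm_fst_le p).trans hpR
  have hz : |inner ℝ (P ω) p.2| ≤ R * ‖P ω‖ :=
    (abs_real_inner_le_norm _ _).trans (by rw [mul_comm]; gcongr; exact (norm_snd_le p).trans hpR)
  have hsq : (p.1 + inner ℝ (P ω) p.2) ^ 2 ≤ 2 * R ^ 2 + 2 * R ^ 2 * ‖P ω‖ ^ 2 := by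
    nlinarith [sq_abs p.1, sq_abs (inner ℝ (P ω) p.2), abs_nonneg p.1,
      abs_nonneg (inner ℝ (P ω) p.2), sq_nonneg (p.1 - inner ℝ (P ω) p.2)]
  calc ‖g (p.1 + inner ℝ (P ω) p.2)‖ ≤ C * (1 + (p.1 + inner ℝ (P ω) p.2) ^ 2) := hgC _
    _ ≤ C * (1 + (2 * R ^ 2 + 2 * R ^ 2 * ‖P ω‖ ^ 2)) := by gcongr
    _ = _ := by ring

lemma continuous_variance_twoSlope [IsProbabilityMeasure μ] (hP : MemLp P 2 μ) (α β : ℝ) :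
    Continuous fun p : ℝ × E => Var[fun ω => twoSlope α β (p.1 + inner ℝ (P ω) p.2); μ] := by
  have hY (p : ℝ × E) := ((memLp_const p.1).add (hP.inner_const p.2)).twoSlope_comp α β
  have hslope (x : ℝ) : |twoSlope α β x| ≤ (|α| + |β|) * (1 + x ^ 2) :=
    (abs_twoSlope_le α β x).trans (by gcongr; exact abs_le_one_add_sq x)
  refine (continuous_integral_comp_add_inner hP (g := fun x => twoSlope α β x ^ 2)
    (by fun_prop) (C := (|α| + |β|) ^ 2) fun x => ?_).sub
    ((continuous_integral_comp_add_inner hP (continuous_twoSlope α β) hslope).pow 2)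
    |>.congr fun p => (variance_eq_sub (hY p)).symm
  rw [abs_pow]
  calc |twoSlope α β x| ^ 2 ≤ ((|α| + |β|) * |x|) ^ 2 := by gcongr; exact abs_twoSlope_le α β x
    _ ≤ (|α| + |β|) ^ 2 * (1 + x ^ 2) := by rw [mul_pow, sq_abs]; gcongr; linarith

lemma variance_twoSlope_smul {r : ℝ} (hr : 0 < r) (α β t : ℝ) (L : E) :
    Var[fun ω => twoSlope α β (t + inner ℝ (P ω) (r • L)); μ] =
      r ^ 2 * Var[fun ω => twoSlope α β (t / r + inner ℝ (P ω) L); μ] := by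
  have h (ω : Ω) : twoSlope α β (t + inner ℝ (P ω) (r • L)) =
      r * twoSlope α β (t / r + inner ℝ (P ω) L) := by
    rw [← twoSlope_mul hr.le, real_inner_smul_right, mul_add, mul_div_cancel₀ t hr.ne']
  simp_rw [h]
  exact variance_const_mul r _ μ

lemma le_variance_twoSlope_of_forall_sphere {α β δ c : ℝ}
    (hvar : ∀ t, |t| < δ → ∀ L ∈ Metric.sphere (0 : E) 1,
      c ≤ Var[fun ω => twoSlope α β (t + inner ℝ (P ω) L); μ])
    {s : ℝ} {K : E} (hsK : |s| < δ * ‖K‖) :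
    c * ‖K‖ ^ 2 ≤ Var[fun ω => twoSlope α β (s + inner ℝ (P ω) K); μ] := by
  have hK : 0 < ‖K‖ := (norm_nonneg K).lt_of_ne fun h => by
    rw [← h, mul_zero] at hsK
    exact (abs_nonneg s).not_gt hsK
  have hscale := variance_twoSlope_smul (μ := μ) (P := P) hK α β s (‖K‖⁻¹ • K)
  rw [smul_inv_smul₀ hK.ne'] at hscale
  rw [hscale, mul_comm c]
  refine mul_le_mul_of_nonneg_left (hvar _ ?_ _ ?_) (sq_nonneg _)
  · rwa [abs_div, abs_norm, div_lt_iff₀ hK]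
  · exact mem_sphere_zero_iff_norm.2 (norm_smul_inv_norm (𝕜 := ℝ) (norm_pos_iff.1 hK))

lemma mul_integral_twoSlope_le [IsProbabilityMeasure μ] (hP : Integrable P μ) (γ α β t : ℝ)
    (L : E) :
    γ * ∫ ω, twoSlope α β (t + inner ℝ (P ω) L) ∂μ ≤
      |γ| * (|α| + |β|) * |t| + |γ| * (|α| + |β|) * (∫ ω, ‖P ω‖ ∂μ) * ‖L‖ := by
  have hbound : ∀ ω, |twoSlope α β (t + inner ℝ (P ω) L)| ≤ (|α| + |β|) * (|t| + ‖L‖ * ‖P ω‖) :=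
    fun ω => (abs_twoSlope_le α β _).trans <| mul_le_mul_of_nonneg_left
      ((abs_add_le _ _).trans (by rw [mul_comm ‖L‖]; gcongr; exact abs_real_inner_le_norm _ _))
      (by positivity)
  calc γ * ∫ ω, twoSlope α β (t + inner ℝ (P ω) L) ∂μ
      ≤ |γ| * ∫ ω, |twoSlope α β (t + inner ℝ (P ω) L)| ∂μ :=
        (le_abs_self _).trans (by rw [abs_mul]; gcongr; exact abs_integral_le_integral_abs)
    _ ≤ |γ| * ∫ ω, (|α| + |β|) * (|t| + ‖L‖ * ‖P ω‖) ∂μ :=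
        mul_le_mul_of_nonneg_left (integral_mono_of_nonneg
          (Eventually.of_forall fun ω => abs_nonneg _)
          (((integrable_const _).fun_add (hP.norm.const_mul _)).const_mul _)
          (Eventually.of_forall hbound)) (abs_nonneg _)
    _ = _ := by
        rw [integral_const_mul, integral_add (integrable_const _) (hP.norm.const_mul _),
          integral_const_mul]
        simp only [integral_const, probReal_univ, one_smul]
        ring

end Probability

theorem Fplus_coercive_general {Ω : Type*} [MeasurableSpace Ω] (ℙ : Measure Ω)
    [IsProbabilityMeasure ℙ] {n : ℕ}
    (P : Ω → EuclideanSpace ℝ (Fin n)) (hmeas : Measurable P)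
    (hL2 : Integrable (fun ω => ‖P ω‖ ^ 2) ℙ)
    (s ρ' γp ap am bp bm : ℝ)
    (htwosided : ∀ L : EuclideanSpace ℝ (Fin n), L ≠ 0 →
      0 < ℙ {ω | 0 < (inner ℝ (P ω) L : ℝ)} ∧ 0 < ℙ {ω | (inner ℝ (P ω) L : ℝ) < 0})
    (hatomless : ∀ L : EuclideanSpace ℝ (Fin n), L ≠ 0 →
      ∀ c : ℝ, ℙ {ω | (inner ℝ (P ω) L : ℝ) = c} = 0)
    (hbp : ap ^ 2 ≤ bp) (hbm : am ^ 2 ≤ bm)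
    (hne : (ρ' + ap, ρ' + am) ≠ ((0 : ℝ), (0 : ℝ))) :
    ∀ M : ℝ, ∃ R > (0 : ℝ), ∀ K : EuclideanSpace ℝ (Fin n),
      R ≤ ‖K‖ → M ≤ Fplus ℙ P s ρ' γp ap am bp bm K := by
  intro M
  have hP : MemLp P 2 ℙ := (memLp_two_iff_integrable_sq_norm hmeas.aestronglyMeasurable).2 hL2
  have hαβ : ρ' + ap ≠ 0 ∨ ρ' + am ≠ 0 := by
    contrapose! hne
    rw [hne.1, hne.2]
  obtain ⟨δ, hδ, c, hc, hvar⟩ := (isCompact_sphere (0 : EuclideanSpace ℝ (Fin n)) 1)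
    |>.exists_pos_forall_le_of_pos_at_zero (continuous_variance_twoSlope hP _ _) fun L hL => by
      have hL0 := ne_zero_of_mem_unit_sphere ⟨L, hL⟩
      simpa only [zero_add] using variance_twoSlope_pos (hP.inner_const L) hαβ
        (htwosided L hL0).1 (htwosided L hL0).2 (hatomless L hL0)
  obtain ⟨R, hR⟩ := exists_forall_le_quadratic hc
    (|γp| * (|ρ' + ap| + |ρ' + am|) * ∫ ω, ‖P ω‖ ∂ℙ) (|γp| * (|ρ' + ap| + |ρ' + am|) * |s|) M
  refine ⟨max R (|s| / δ + 1), by positivity, fun K hK => ?_⟩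
  have hsK : |s| < δ * ‖K‖ := by
    rw [mul_comm]
    exact (div_lt_iff₀ hδ).1 ((lt_add_one _).trans_le (le_of_max_le_right hK))
  have hvarK := le_variance_twoSlope_of_forall_sphere hvar hsK
  have hmean := mul_integral_twoSlope_le (hP.integrable one_le_two) γp (ρ' + ap) (ρ' + am) s K
  calc M ≤ c * ‖K‖ ^ 2 - |γp| * (|ρ' + ap| + |ρ' + am|) * (∫ ω, ‖P ω‖ ∂ℙ) * ‖K‖ -
        |γp| * (|ρ' + ap| + |ρ' + am|) * |s| := hR _ (le_of_max_le_left hK)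
    _ ≤ _ := by linarith
    _ ≤ Fplus ℙ P s ρ' γp ap am bp bm K := variance_sub_le_Fplus hP hbp hbm K

/-- Coercivity of `F⁺`: under the two-sidedness, directional atomlessness,
`b⁺ ≥ (a⁺)²`, `b⁻ ≥ (a⁻)²` and `(ρ'+a⁺, ρ'+a⁻) ≠ (0,0)` assumptions,
`F⁺(K) → +∞` as `‖K‖ → +∞`. -/
theorem Fplus_coercive {Ω : Type*} [MeasurableSpace Ω] (ℙ : Measure Ω)
    [IsProbabilityMeasure ℙ] {n : ℕ} (hn : 1 ≤ n)
    (P : Ω → EuclideanSpace ℝ (Fin n)) (hmeas : Measurable P)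
    (hL2 : Integrable (fun ω => ‖P ω‖ ^ 2) ℙ)
    (s ρ' γp ap am bp bm : ℝ) (hs : 0 < s) (hρ : 0 < ρ')
    (htwosided : ∀ L : EuclideanSpace ℝ (Fin n), L ≠ 0 →
      0 < ℙ {ω | 0 < (inner ℝ (P ω) L : ℝ)} ∧ 0 < ℙ {ω | (inner ℝ (P ω) L : ℝ) < 0})
    (hatomless : ∀ L : EuclideanSpace ℝ (Fin n), L ≠ 0 →
      ∀ c : ℝ, ℙ {ω | (inner ℝ (P ω) L : ℝ) = c} = 0)
    (hbp : ap ^ 2 ≤ bp) (hbm : am ^ 2 ≤ bm)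
    (hne : (ρ' + ap, ρ' + am) ≠ ((0 : ℝ), (0 : ℝ))) :
    ∀ M : ℝ, ∃ R > (0 : ℝ), ∀ K : EuclideanSpace ℝ (Fin n),
      R ≤ ‖K‖ → M ≤ Fplus ℙ P s ρ' γp ap am bp bm K :=
  Fplus_coercive_general ℙ P hmeas hL2 s ρ' γp ap am bp bm htwosided hatomless hbp hbm hne
end

section
/- Let y be a real random variable with E[y²] < ∞ whose law is atomless and which satisfies ℙ(y > 0) > 0 and ℙ(y < 0) > 0. Then the 2×2 covariance matrix of the pair (y·1{y ≥ 0}, y·1{y < 0}) is positive definite; equivalently, for every (v₁, v₂) ∈ ℝ² with (v₁, v₂) ≠ (0,0) one has Var(v₁·y·1{y ≥ 0} + v₂·y·1{y < 0}) > 0. -/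
open MeasureTheory

/-!
Since `y` is square integrable so is the combination `Z`, and `Var Z = 0` would force `Z` to be
almost surely equal to a constant `c`. If `v₁ ≠ 0`, then on `{y > 0}` this reads `y = c / v₁`,
so `{y > 0}` would be contained, up to a null set, in the atom `{y = c / v₁}`, which is null;
this contradicts `ℙ(y > 0) > 0`. If `v₁ = 0`, then `v₂ ≠ 0` and the same argument applies
on `{y < 0}`.
-/

section

open ProbabilityTheory

variable {Ω : Type*} [MeasurableSpace Ω] {μ : Measure Ω}

lemma variance_pos_of_not_ae_eq_integral [IsFiniteMeasure μ] {X : Ω → ℝ} (hX : MemLp X 2 μ)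
    (h : ¬ ∀ᵐ ω ∂μ, X ω = μ[X]) : 0 < Var[X; μ] :=
  (variance_nonneg X μ).lt_of_ne' fun h0 => h (ae_eq_integral_of_variance_eq_zero hX h0)

lemma MeasureTheory.MemLp.mul_ite {p : ENNReal} {y : Ω → ℝ} (hy : MemLp y p μ) {P : Ω → Prop}
    [DecidablePred P] (hP : MeasurableSet {ω | P ω}) :
    MemLp (fun ω => y ω * if P ω then 1 else 0) p μ := by
  convert hy.indicator hP using 1
  ext ω
  by_cases h : P ω <;> simp [h]

lemma measure_eq_zero_of_ae_mul_eq_const {y : Ω → ℝ} (hatomless : ∀ c : ℝ, μ {ω | y ω = c} = 0)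
    {v c : ℝ} (hv : v ≠ 0) {s : Set Ω} (h : ∀ᵐ ω ∂μ, ω ∈ s → v * y ω = c) : μ s = 0 :=
  measure_mono_null_ae (h.mono fun _ hω hs => eq_div_of_mul_eq hv ((mul_comm _ _).trans (hω hs)))
    (hatomless (c / v))

end

/-- If `y` is a square-integrable real random variable with atomless law and
`ℙ(y > 0) > 0`, `ℙ(y < 0) > 0`, then the covariance matrix of the pair
`(y·1{y ≥ 0}, y·1{y < 0})` is positive definite; equivalently, for every
`(v₁, v₂) ≠ (0, 0)` the variance of `v₁·y·1{y ≥ 0} + v₂·y·1{y < 0}` is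
strictly positive, where `Var(Z) = E[Z²] − (E[Z])²`. -/
theorem variance_combination_indicator_pos {Ω : Type*} [MeasurableSpace Ω]
    (ℙ : Measure Ω) [IsProbabilityMeasure ℙ]
    (y : Ω → ℝ) (hmeas : Measurable y)
    (hL2 : Integrable (fun ω => (y ω) ^ 2) ℙ)
    (hatomless : ∀ c : ℝ, ℙ {ω | y ω = c} = 0)
    (hpos : 0 < ℙ {ω | 0 < y ω}) (hneg : 0 < ℙ {ω | y ω < 0}) :
    ∀ v₁ v₂ : ℝ, (v₁, v₂) ≠ ((0 : ℝ), (0 : ℝ)) →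
      0 < (∫ ω, (v₁ * y ω * (if 0 ≤ y ω then (1:ℝ) else 0)
              + v₂ * y ω * (if y ω < 0 then (1:ℝ) else 0)) ^ 2 ∂ℙ)
          - (∫ ω, v₁ * y ω * (if 0 ≤ y ω then (1:ℝ) else 0)
              + v₂ * y ω * (if y ω < 0 then (1:ℝ) else 0) ∂ℙ) ^ 2 := by
  intro v₁ v₂ hv
  set Z : Ω → ℝ := fun ω => v₁ * y ω * (if 0 ≤ y ω then (1:ℝ) else 0)
      + v₂ * y ω * (if y ω < 0 then (1:ℝ) else 0)
  have hy : MemLp y 2 ℙ := (memLp_two_iff_integrable_sq hmeas.aestronglyMeasurable).2 hL2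
  have hy_nonneg : MemLp (fun ω => y ω * if 0 ≤ y ω then (1:ℝ) else 0) 2 ℙ :=
    hy.mul_ite (hmeas measurableSet_Ici)
  have hy_neg : MemLp (fun ω => y ω * if y ω < 0 then (1:ℝ) else 0) 2 ℙ :=
    hy.mul_ite (hmeas measurableSet_Iio)
  have hZ : MemLp Z 2 ℙ := by
    convert (hy_nonneg.const_mul v₁).add (hy_neg.const_mul v₂) using 1
    ext ω
    simp only [Z, Pi.add_apply, mul_assoc]
  have hvar : ProbabilityTheory.variance Z ℙ = ∫ ω, Z ω ^ 2 ∂ℙ - (∫ ω, Z ω ∂ℙ) ^ 2 :=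
    ProbabilityTheory.variance_eq_sub hZ
  rw [← hvar]
  refine variance_pos_of_not_ae_eq_integral hZ fun hconst => ?_
  set c := ∫ ω, Z ω ∂ℙ
  rcases eq_or_ne v₁ 0 with rfl | hv₁
  · have hv₂ : v₂ ≠ 0 := by rintro rfl; exact hv rfl
    refine hneg.ne' (measure_eq_zero_of_ae_mul_eq_const (c := c) hatomless hv₂ ?_)
    filter_upwards [hconst] with ω hω (hlt : y ω < 0)
    simpa [Z, hlt] using hω
  · refine hpos.ne' (measure_eq_zero_of_ae_mul_eq_const (c := c) hatomless hv₁ ?_)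
    filter_upwards [hconst] with ω hω (hlt : 0 < y ω)
    simpa [Z, hlt.le, not_lt.2 hlt.le] using hω
end

section
/- Suppose P is two-sided and directionally atomless, that b⁺ ≥ (a⁺)² and b⁻ ≥ (a⁻)², and that (ρ'+a⁺, ρ'+a⁻) ≠ (0,0). Then F⁺ attains a global minimum on ℝⁿ (there exists K⁺ ∈ ℝⁿ with F⁺(K⁺) ≤ F⁺(K) for all K ∈ ℝⁿ), and likewise F⁻ attains a global minimum on ℝⁿ. -/
open MeasureTheory

/-- The function `F⁻` from the paper, written with expectations as Bochner integrals. -/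
noncomputable def Fminus {Ω : Type*} [MeasurableSpace Ω] (ℙ : Measure Ω) {n : ℕ}
    (P : Ω → EuclideanSpace ℝ (Fin n)) (s ρ' γm ap am bp bm : ℝ)
    (K : EuclideanSpace ℝ (Fin n)) : ℝ :=
  let pk : Ω → ℝ := fun ω => inner ℝ (P ω) K
  let A : ℝ :=
    (∫ ω, ap * (s + pk ω) * (if s + pk ω ≤ 0 then (1:ℝ) else 0) ∂ℙ) +
    (∫ ω, am * (s + pk ω) * (if 0 < s + pk ω then (1:ℝ) else 0) ∂ℙ)
  ρ' ^ 2 * ((∫ ω, (pk ω) ^ 2 ∂ℙ) - (∫ ω, pk ω ∂ℙ) ^ 2) +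
  (∫ ω, (2 * ρ' * ap + bp) * (s + pk ω) ^ 2 * (if s + pk ω ≤ 0 then (1:ℝ) else 0) ∂ℙ) +
  (∫ ω, (2 * ρ' * am + bm) * (s + pk ω) ^ 2 * (if 0 < s + pk ω then (1:ℝ) else 0) ∂ℙ) -
  A ^ 2 - 2 * ρ' * A * (s + ∫ ω, pk ω ∂ℙ) + γm * A +
  ρ' * γm * (s + ∫ ω, pk ω ∂ℙ)


/-! Write `Y = s + P'K`, `y⁺ = max y 0`, `y⁻ = min y 0` and `φ(y) = c y⁺ + d y⁻` with
`c = ρ' + a⁺`, `d = ρ' + a⁻`. Expanding the squares shows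
`F⁺(K) = Var φ(Y) + (b⁺ - (a⁺)²) E[(Y⁺)²] + (b⁻ - (a⁻)²) E[(Y⁻)²] - γ⁺ E φ(Y)`,
and `F⁻` is `F⁺` with the roles of `+` and `-` exchanged. This is continuous in `K`, and it is
coercive: `φ` is positively homogeneous and Lipschitz, so `Var φ(s + P'K) ≥ v ‖K‖² - O(‖K‖)`
where `v` is the minimum of `L ↦ Var φ(P'L)` on the unit sphere. That minimum is positive, since
a vanishing variance would make `P'L` almost surely constant on `{P'L > 0}` (if `c ≠ 0`) or on
`{P'L < 0}` (if `d ≠ 0`), which two-sidedness and atomlessness forbid. -/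

open Filter
open scoped RealInnerProductSpace

noncomputable def hinge (c d y : ℝ) : ℝ := c * max y 0 + d * min y 0

section Hinge

variable (c d : ℝ)

@[simp] lemma hinge_zero : hinge c d 0 = 0 := by simp [hinge]

lemma hinge_of_nonneg {y : ℝ} (hy : 0 ≤ y) : hinge c d y = c * y := by simp [hinge, hy]

lemma hinge_of_nonpos {y : ℝ} (hy : y ≤ 0) : hinge c d y = d * y := by simp [hinge, hy]

lemma hinge_one_one (y : ℝ) : hinge 1 1 y = y := by simp [hinge, max_add_min]

lemma hinge_sq (y : ℝ) : hinge c d y ^ 2 = c ^ 2 * max y 0 ^ 2 + d ^ 2 * min y 0 ^ 2 := by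
  rcases le_total 0 y with hy | hy
  · rw [hinge_of_nonneg c d hy, max_eq_left hy, min_eq_right hy]; ring
  · rw [hinge_of_nonpos c d hy, max_eq_right hy, min_eq_left hy]; ring

lemma hinge_mul_of_nonneg {r : ℝ} (hr : 0 ≤ r) (y : ℝ) : hinge c d (r * y) = r * hinge c d y := by
  rcases le_total 0 y with hy | hy
  · rw [hinge_of_nonneg c d hy, hinge_of_nonneg c d (mul_nonneg hr hy)]; ring
  · rw [hinge_of_nonpos c d hy, hinge_of_nonpos c d (mul_nonpos_of_nonneg_of_nonpos hr hy)]; ring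

lemma lipschitzWith_hinge : LipschitzWith (‖c‖₊ + ‖d‖₊) (hinge c d) := by
  unfold hinge
  simpa using ((lipschitzWith_smul c).comp (LipschitzWith.id.max_const 0)).add
    ((lipschitzWith_smul d).comp (LipschitzWith.id.min_const 0))

lemma abs_hinge_sub_hinge_le (y z : ℝ) :
    |hinge c d y - hinge c d z| ≤ (|c| + |d|) * |y - z| := by
  simpa using (lipschitzWith_hinge c d).norm_sub_le y z

lemma abs_hinge_le (y : ℝ) : |hinge c d y| ≤ (|c| + |d|) * |y| := by
  simpa using abs_hinge_sub_hinge_le c d y 0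

end Hinge

section Moments

variable {Ω : Type*} [MeasurableSpace Ω] {μ : Measure Ω} {Y : Ω → ℝ} {p : ENNReal}

lemma MeasureTheory.MemLp.max_zero (hY : MemLp Y p μ) : MemLp (fun ω => max (Y ω) 0) p μ :=
  (LipschitzWith.id.max_const 0).comp_memLp (by simp) hY

lemma MeasureTheory.MemLp.min_zero (hY : MemLp Y p μ) : MemLp (fun ω => min (Y ω) 0) p μ :=
  (LipschitzWith.id.min_const 0).comp_memLp (by simp) hY

lemma MeasureTheory.MemLp.hinge (hY : MemLp Y p μ) (c d : ℝ) :
    MemLp (fun ω => hinge c d (Y ω)) p μ :=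
  (lipschitzWith_hinge c d).comp_memLp (hinge_zero c d) hY

lemma integral_hinge [IsFiniteMeasure μ] (hY : MemLp Y 2 μ) (c d : ℝ) :
    ∫ ω, hinge c d (Y ω) ∂μ = c * ∫ ω, max (Y ω) 0 ∂μ + d * ∫ ω, min (Y ω) 0 ∂μ := by
  simp only [hinge]
  rw [integral_add ((hY.max_zero.integrable one_le_two).const_mul c)
    ((hY.min_zero.integrable one_le_two).const_mul d), integral_const_mul, integral_const_mul]

lemma integral_hinge_sq (hY : MemLp Y 2 μ) (c d : ℝ) :
    ∫ ω, hinge c d (Y ω) ^ 2 ∂μ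
      = c ^ 2 * ∫ ω, max (Y ω) 0 ^ 2 ∂μ + d ^ 2 * ∫ ω, min (Y ω) 0 ^ 2 ∂μ := by
  simp only [hinge_sq]
  rw [integral_add (hY.max_zero.integrable_sq.const_mul _)
    (hY.min_zero.integrable_sq.const_mul _), integral_const_mul, integral_const_mul]

end Moments

section Continuity

variable {Ω E : Type*} [MeasurableSpace Ω] {μ : Measure Ω} [IsFiniteMeasure μ]
  [NormedAddCommGroup E] [InnerProductSpace ℝ E] {P : Ω → E}

lemma continuous_integral_comp_inner (hP : MemLp P 2 μ) {g : ℝ → ℝ} (hg : Continuous g) {C : ℝ}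
    (hgC : ∀ y, |g y| ≤ C * (1 + y ^ 2)) : Continuous fun K : E => ∫ ω, g ⟪P ω, K⟫ ∂μ := by
  have hC : 0 ≤ C := by simpa using (abs_nonneg _).trans (hgC 0)
  refine continuous_iff_continuousAt.2 fun K₀ => continuousAt_of_dominated
    (bound := fun ω => C * (1 + (‖K₀‖ + 1) ^ 2 * ‖P ω‖ ^ 2)) ?_ ?_ ?_ ?_
  · exact .of_forall fun K =>
      hg.comp_aestronglyMeasurable (hP.1.inner aestronglyMeasurable_const)
  · filter_upwards [Metric.closedBall_mem_nhds K₀ one_pos] with K hK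
    refine .of_forall fun ω => (hgC _).trans (mul_le_mul_of_nonneg_left ?_ hC)
    have hK' : ‖K‖ ≤ ‖K₀‖ + 1 := by
      linarith [norm_le_norm_add_norm_sub' K K₀, mem_closedBall_iff_norm.1 hK]
    have := abs_real_inner_le_norm (P ω) K
    gcongr 1 + ?_
    rw [← sq_abs, mul_comm, ← mul_pow]
    gcongr
    exact this.trans (mul_le_mul_of_nonneg_left hK' (norm_nonneg _))
  · exact ((integrable_const 1).add
      ((hP.integrable_norm_pow two_ne_zero).const_mul _)).const_mul C
  · exact .of_forall fun ω => (hg.comp (continuous_const.inner continuous_id)).continuousAt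

lemma memLp_const_add_inner (hP : MemLp P 2 μ) (s : ℝ) (K : E) :
    MemLp (fun ω => s + ⟪P ω, K⟫) 2 μ :=
  (memLp_const s).add (hP.inner_const K)

lemma continuous_integral_comp_add_inner_s3 (hP : MemLp P 2 μ) {ψ : ℝ → ℝ} (hψ : Continuous ψ)
    {M : ℝ} (hψM : ∀ z, |ψ z| ≤ M * |z|) (s : ℝ) :
    Continuous fun K : E => ∫ ω, ψ (s + ⟪P ω, K⟫) ∂μ := by
  have hM : 0 ≤ M := by simpa using (abs_nonneg _).trans (hψM 1)
  refine continuous_integral_comp_inner hP (g := fun y => ψ (s + y))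
    (hψ.comp (continuous_const_add s)) (C := M * (|s| + 1))
    fun y => (hψM _).trans ?_
  have := abs_add_le s y
  have : |y| ≤ 1 + y ^ 2 := by nlinarith [sq_abs y, sq_nonneg (|y| - 1)]
  nlinarith [abs_nonneg s, abs_nonneg y, mul_nonneg hM (abs_nonneg s), sq_nonneg y]

lemma continuous_integral_sq_comp_add_inner (hP : MemLp P 2 μ) {ψ : ℝ → ℝ} (hψ : Continuous ψ)
    {M : ℝ} (hψM : ∀ z, |ψ z| ≤ M * |z|) (s : ℝ) :
    Continuous fun K : E => ∫ ω, ψ (s + ⟪P ω, K⟫) ^ 2 ∂μ := by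
  refine continuous_integral_comp_inner hP (g := fun y => ψ (s + y) ^ 2)
    ((hψ.comp (continuous_const_add s)).pow 2) (C := 2 * M ^ 2 * (s ^ 2 + 1)) fun y => ?_
  have h := hψM (s + y)
  rw [abs_of_nonneg (sq_nonneg _), ← sq_abs]
  calc |ψ (s + y)| ^ 2 ≤ (M * |s + y|) ^ 2 := by gcongr
    _ = M ^ 2 * (s + y) ^ 2 := by rw [mul_pow, sq_abs]
    _ ≤ 2 * M ^ 2 * (s ^ 2 + 1) * (1 + y ^ 2) := by
      nlinarith [sq_nonneg (s - y), sq_nonneg M, mul_nonneg (sq_nonneg M) (sq_nonneg (s * y))]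

end Continuity

lemma sq_sub_mul_abs_le_sq_add (a : ℝ) {b δ : ℝ} (hb : |b| ≤ δ) :
    a ^ 2 - 2 * δ * |a| ≤ (a + b) ^ 2 := by
  nlinarith [neg_abs_le (a * b), abs_mul a b, mul_le_mul_of_nonneg_left hb (abs_nonneg a),
    sq_nonneg b]

section Variance

open ProbabilityTheory

variable {Ω : Type*} [MeasurableSpace Ω] {μ : Measure Ω}

lemma measure_eq_zero_of_ae_eq_const_of_eq_mul {Z X : Ω → ℝ} {m e : ℝ} (hZ : ∀ᵐ ω ∂μ, Z ω = m)
    (he : e ≠ 0) (hX : ∀ r, μ {ω | X ω = r} = 0) {S : Set Ω} (hS : ∀ ω ∈ S, Z ω = e * X ω) :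
    μ S = 0 := by
  refine measure_mono_null (fun ω hω => ?_) (measure_union_null (ae_iff.1 hZ) (hX (m / e)))
  by_cases h : Z ω = m
  · exact Or.inr (by rw [Set.mem_ofPred_eq, eq_div_iff he, mul_comm, ← hS ω hω, h])
  · exact Or.inl h

lemma variance_hinge_pos [IsFiniteMeasure μ] {X : Ω → ℝ} (hX : MemLp X 2 μ)
    (hpos : 0 < μ {ω | 0 < X ω}) (hneg : 0 < μ {ω | X ω < 0}) (hatom : ∀ r, μ {ω | X ω = r} = 0)
    {c d : ℝ} (hcd : c ≠ 0 ∨ d ≠ 0) : 0 < Var[fun ω => hinge c d (X ω); μ] := by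
  refine (variance_nonneg _ _).lt_of_ne' fun h0 => ?_
  have hconst := ae_eq_integral_of_variance_eq_zero (hX.hinge c d) h0
  rcases hcd with hc | hd
  · exact hpos.ne' (measure_eq_zero_of_ae_eq_const_of_eq_mul hconst hc hatom
      fun ω hω => hinge_of_nonneg c d (le_of_lt hω))
  · exact hneg.ne' (measure_eq_zero_of_ae_eq_const_of_eq_mul hconst hd hatom
      fun ω hω => hinge_of_nonpos c d (le_of_lt hω))

variable [IsProbabilityMeasure μ]

lemma integral_abs_sub_integral_le {U : Ω → ℝ} (hU : Integrable U μ) :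
    ∫ ω, |U ω - ∫ ω', U ω' ∂μ| ∂μ ≤ 2 * ∫ ω, |U ω| ∂μ := by
  calc ∫ ω, |U ω - ∫ ω', U ω' ∂μ| ∂μ ≤ ∫ ω, (|U ω| + |∫ ω', U ω' ∂μ|) ∂μ :=
        integral_mono (hU.sub (integrable_const _)).abs (hU.abs.add (integrable_const _))
          fun ω => abs_sub _ _
    _ = ∫ ω, |U ω| ∂μ + |∫ ω', U ω' ∂μ| := by rw [integral_add hU.abs (integrable_const _)]; simp
    _ ≤ 2 * ∫ ω, |U ω| ∂μ := by linarith [abs_integral_le_integral_abs (f := U) (μ := μ)]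

lemma variance_sub_le_variance_of_abs_sub_le {U Z : Ω → ℝ} {δ : ℝ} (hU : MemLp U 2 μ)
    (hZ : AEStronglyMeasurable Z μ) (hZU : ∀ ω, |Z ω - U ω| ≤ δ) :
    Var[U; μ] - 8 * δ * ∫ ω, |U ω| ∂μ ≤ Var[Z; μ] := by
  have hW : MemLp (fun ω => Z ω - U ω) 2 μ :=
    .of_bound (hZ.sub hU.1) δ (.of_forall fun ω => (Real.norm_eq_abs _).trans_le (hZU ω))
  have hZ2 : MemLp Z 2 μ := by convert hW.add hU using 1; ext ω; simp
  set a : Ω → ℝ := fun ω => U ω - ∫ ω', U ω' ∂μ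
  have hmean : |∫ ω, Z ω ∂μ - ∫ ω, U ω ∂μ| ≤ δ := by
    rw [← integral_sub (hZ2.integrable one_le_two) (hU.integrable one_le_two)]
    simpa using norm_integral_le_of_norm_le_const (μ := μ)
      (.of_forall fun ω => (Real.norm_eq_abs _).trans_le (hZU ω))
  have hpt : ∀ ω, a ω ^ 2 - 2 * (2 * δ) * |a ω| ≤ (Z ω - ∫ ω', Z ω' ∂μ) ^ 2 := fun ω => by
    have hb : |(Z ω - ∫ ω', Z ω' ∂μ) - a ω| ≤ 2 * δ := by
      calc |(Z ω - ∫ ω', Z ω' ∂μ) - a ω|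
          = |(Z ω - U ω) - (∫ ω', Z ω' ∂μ - ∫ ω', U ω' ∂μ)| := by simp only [a]; ring_nf
        _ ≤ |Z ω - U ω| + |∫ ω', Z ω' ∂μ - ∫ ω', U ω' ∂μ| := abs_sub _ _
        _ ≤ 2 * δ := by linarith [hZU ω]
    simpa using sq_sub_mul_abs_le_sq_add (a ω) hb
  have ha : MemLp a 2 μ := hU.sub (memLp_const _)
  rw [variance_eq_integral hU.aemeasurable, variance_eq_integral hZ2.aemeasurable]
  calc ∫ ω, a ω ^ 2 ∂μ - 8 * δ * ∫ ω, |U ω| ∂μ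
      ≤ ∫ ω, a ω ^ 2 ∂μ - 2 * (2 * δ) * ∫ ω, |a ω| ∂μ := by
        have hδ : 0 ≤ δ := (abs_nonneg _).trans hmean
        have := integral_abs_sub_integral_le (hU.integrable one_le_two)
        nlinarith
    _ = ∫ ω, (a ω ^ 2 - 2 * (2 * δ) * |a ω|) ∂μ := by
        rw [integral_sub ha.integrable_sq ((ha.integrable one_le_two).abs.const_mul _),
          integral_const_mul]
    _ ≤ ∫ ω, (Z ω - ∫ ω', Z ω' ∂μ) ^ 2 ∂μ :=
        integral_mono (ha.integrable_sq.sub ((ha.integrable one_le_two).abs.const_mul _))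
          (hZ2.sub (memLp_const _)).integrable_sq hpt

end Variance

section Objective

open ProbabilityTheory

noncomputable def hingeObjective {Ω : Type*} [MeasurableSpace Ω] (μ : Measure Ω) (c d γ w₁ w₂ : ℝ)
    (Y : Ω → ℝ) : ℝ :=
  Var[fun ω => hinge c d (Y ω); μ] + w₁ * ∫ ω, max (Y ω) 0 ^ 2 ∂μ
    + w₂ * ∫ ω, min (Y ω) 0 ^ 2 ∂μ + γ * ∫ ω, hinge c d (Y ω) ∂μ

variable {Ω E : Type*} [MeasurableSpace Ω] {μ : Measure Ω} [IsProbabilityMeasure μ]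
  [NormedAddCommGroup E] [InnerProductSpace ℝ E] {P : Ω → E}

lemma continuous_variance_hinge (hP : MemLp P 2 μ) (c d s : ℝ) :
    Continuous fun K : E => Var[fun ω => hinge c d (s + ⟪P ω, K⟫); μ] := by
  have hvar : ∀ K : E, Var[fun ω => hinge c d (s + ⟪P ω, K⟫); μ]
      = ∫ ω, hinge c d (s + ⟪P ω, K⟫) ^ 2 ∂μ - (∫ ω, hinge c d (s + ⟪P ω, K⟫) ∂μ) ^ 2 :=
    fun K => variance_eq_sub ((memLp_const_add_inner hP s K).hinge c d)
  simp only [hvar]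
  exact (continuous_integral_sq_comp_add_inner hP (lipschitzWith_hinge c d).continuous
    (abs_hinge_le c d) s).sub ((continuous_integral_comp_add_inner_s3 hP
      (lipschitzWith_hinge c d).continuous (abs_hinge_le c d) s).pow 2)

lemma continuous_hingeObjective (hP : MemLp P 2 μ) (c d γ w₁ w₂ s : ℝ) :
    Continuous fun K : E => hingeObjective μ c d γ w₁ w₂ (fun ω => s + ⟪P ω, K⟫) := by
  have hmax := continuous_integral_sq_comp_add_inner hP (ψ := fun z => max z 0)
    (continuous_id.max continuous_const) (M := 1)
    (fun z => by simpa using abs_max_le_max_abs_abs (a := z) (b := 0)) s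
  have hmin := continuous_integral_sq_comp_add_inner hP (ψ := fun z => min z 0)
    (continuous_id.min continuous_const) (M := 1)
    (fun z => by simpa using abs_min_le_max_abs_abs (a := z) (b := 0)) s
  have hhinge := continuous_integral_comp_add_inner_s3 hP (lipschitzWith_hinge c d).continuous
    (abs_hinge_le c d) s
  exact (((continuous_variance_hinge hP c d s).add (continuous_const.mul hmax)).add
    (continuous_const.mul hmin)).add (continuous_const.mul hhinge)

lemma exists_pos_mul_norm_sq_le_variance_hinge [FiniteDimensional ℝ E] (hP : MemLp P 2 μ)
    (htwo : ∀ L : E, L ≠ 0 → 0 < μ {ω | 0 < ⟪P ω, L⟫} ∧ 0 < μ {ω | ⟪P ω, L⟫ < 0})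
    (hatom : ∀ L : E, L ≠ 0 → ∀ r : ℝ, μ {ω | ⟪P ω, L⟫ = r} = 0) {c d : ℝ}
    (hcd : c ≠ 0 ∨ d ≠ 0) :
    ∃ v > 0, ∀ K : E, v * ‖K‖ ^ 2 ≤ Var[fun ω => hinge c d ⟪P ω, K⟫; μ] := by
  obtain ⟨v, hv, hvL⟩ := (isCompact_sphere (0 : E) 1).exists_forall_le'
    (by simpa using (continuous_variance_hinge hP c d 0).continuousOn) fun L hL => by
      have hL0 : L ≠ 0 := ne_zero_of_mem_unit_sphere ⟨L, hL⟩
      simpa using variance_hinge_pos (hP.inner_const L) (htwo L hL0).1 (htwo L hL0).2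
        (hatom L hL0) hcd
  refine ⟨v, hv, fun K => ?_⟩
  rcases eq_or_ne K 0 with rfl | hK
  · simp
  have hunit : ‖‖K‖⁻¹ • K‖ = 1 := norm_smul_inv_norm hK
  calc v * ‖K‖ ^ 2 ≤ ‖K‖ ^ 2 * Var[fun ω => hinge c d ⟪P ω, ‖K‖⁻¹ • K⟫; μ] := by
        rw [mul_comm]; gcongr; simpa using hvL _ (by simpa using hunit)
    _ = Var[fun ω => hinge c d ⟪P ω, K⟫; μ] := by
        rw [← variance_const_mul]
        congr with ω
        rw [← hinge_mul_of_nonneg c d (norm_nonneg K), real_inner_smul_right,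
          mul_inv_cancel_left₀ (norm_ne_zero_iff.2 hK)]

lemma integral_abs_hinge_le (hP : MemLp P 2 μ) (c d t : ℝ) (K : E) :
    ∫ ω, |hinge c d (t + ⟪P ω, K⟫)| ∂μ ≤ (|c| + |d|) * (|t| + ‖K‖ * ∫ ω, ‖P ω‖ ∂μ) := by
  have hnorm : Integrable (fun ω => ‖P ω‖) μ := (hP.integrable one_le_two).norm
  calc ∫ ω, |hinge c d (t + ⟪P ω, K⟫)| ∂μ
      ≤ ∫ ω, ((|c| + |d|) * |t| + (|c| + |d|) * ‖K‖ * ‖P ω‖) ∂μ := by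
        refine integral_mono (((memLp_const_add_inner hP t K).hinge c d).integrable
          one_le_two).abs ((integrable_const _).add (hnorm.const_mul _)) fun ω => ?_
        have := abs_real_inner_le_norm (P ω) K
        have := abs_add_le t ⟪P ω, K⟫
        have := abs_hinge_le c d (t + ⟪P ω, K⟫)
        have hM : 0 ≤ |c| + |d| := by positivity
        nlinarith
    _ = (|c| + |d|) * (|t| + ‖K‖ * ∫ ω, ‖P ω‖ ∂μ) := by
        rw [integral_add (integrable_const _) (hnorm.const_mul _), integral_const,
          integral_const_mul, probReal_univ, one_smul]
        ring

lemma quadratic_le_hingeObjective (hP : MemLp P 2 μ) {c d v : ℝ}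
    (hv : ∀ K : E, v * ‖K‖ ^ 2 ≤ Var[fun ω => hinge c d ⟪P ω, K⟫; μ]) (γ : ℝ) {w₁ w₂ : ℝ}
    (hw₁ : 0 ≤ w₁) (hw₂ : 0 ≤ w₂) (s : ℝ) (K : E) :
    v * ‖K‖ ^ 2 - (|c| + |d|) * (8 * (|c| + |d|) * |s| + |γ|) * (∫ ω, ‖P ω‖ ∂μ) * ‖K‖
        - |γ| * (|c| + |d|) * |s|
      ≤ hingeObjective μ c d γ w₁ w₂ (fun ω => s + ⟪P ω, K⟫) := by
  set M := |c| + |d|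
  set m := ∫ ω, ‖P ω‖ ∂μ
  have hZ := (memLp_const_add_inner hP s K).hinge c d
  have hvar := variance_sub_le_variance_of_abs_sub_le ((hP.inner_const K).hinge c d) hZ.1
    (fun ω => by simpa using abs_hinge_sub_hinge_le c d (s + ⟪P ω, K⟫) ⟪P ω, K⟫)
  have hU := integral_abs_hinge_le hP c d 0 K
  have hZabs := integral_abs_hinge_le hP c d s K
  simp only [zero_add, abs_zero] at hU
  have hγ : -(|γ| * (M * (|s| + ‖K‖ * m))) ≤ γ * ∫ ω, hinge c d (s + ⟪P ω, K⟫) ∂μ := by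
    refine neg_le_of_abs_le ?_
    rw [abs_mul]
    exact mul_le_mul_of_nonneg_left (abs_integral_le_integral_abs.trans hZabs) (abs_nonneg _)
  have h8 : 8 * (M * |s|) * ∫ ω, |hinge c d ⟪P ω, K⟫| ∂μ ≤ 8 * (M * |s|) * (M * (‖K‖ * m)) :=
    mul_le_mul_of_nonneg_left hU (by positivity)
  have hw₁' : 0 ≤ w₁ * ∫ ω, max (s + ⟪P ω, K⟫) 0 ^ 2 ∂μ :=
    mul_nonneg hw₁ (integral_nonneg fun ω => sq_nonneg _)
  have hw₂' : 0 ≤ w₂ * ∫ ω, min (s + ⟪P ω, K⟫) 0 ^ 2 ∂μ :=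
    mul_nonneg hw₂ (integral_nonneg fun ω => sq_nonneg _)
  simp only [hingeObjective]
  nlinarith [hv K]

lemma tendsto_quadratic_atTop {a : ℝ} (ha : 0 < a) (b c : ℝ) :
    Tendsto (fun r : ℝ => a * r ^ 2 - b * r - c) atTop atTop := by
  have h : Tendsto (fun r : ℝ => r * (a * r - b)) atTop atTop :=
    tendsto_id.atTop_mul_atTop₀ (tendsto_atTop_add_const_right _ (-b)
      (tendsto_id.const_mul_atTop ha))
  exact (tendsto_atTop_add_const_right _ (-c) h).congr fun r => by ring

theorem exists_forall_hingeObjective_le [FiniteDimensional ℝ E] (hP : MemLp P 2 μ)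
    (htwo : ∀ L : E, L ≠ 0 → 0 < μ {ω | 0 < ⟪P ω, L⟫} ∧ 0 < μ {ω | ⟪P ω, L⟫ < 0})
    (hatom : ∀ L : E, L ≠ 0 → ∀ r : ℝ, μ {ω | ⟪P ω, L⟫ = r} = 0) {c d : ℝ}
    (hcd : c ≠ 0 ∨ d ≠ 0) (γ : ℝ) {w₁ w₂ : ℝ} (hw₁ : 0 ≤ w₁) (hw₂ : 0 ≤ w₂) (s : ℝ) :
    ∃ K₀ : E, ∀ K, hingeObjective μ c d γ w₁ w₂ (fun ω => s + ⟪P ω, K₀⟫)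
      ≤ hingeObjective μ c d γ w₁ w₂ (fun ω => s + ⟪P ω, K⟫) := by
  obtain ⟨v, hv, hvK⟩ := exists_pos_mul_norm_sq_le_variance_hinge hP htwo hatom hcd
  exact (continuous_hingeObjective hP c d γ w₁ w₂ s).exists_forall_le <|
    tendsto_atTop_mono (quadratic_le_hingeObjective hP hvK γ hw₁ hw₂ s) <|
      (tendsto_quadratic_atTop hv _ _).comp tendsto_norm_cocompact_atTop

end Objective

section Indicators

variable (y : ℝ)

lemma mul_ite_nonneg_eq_max : y * (if 0 ≤ y then (1 : ℝ) else 0) = max y 0 := by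
  split_ifs with h
  · rw [mul_one, max_eq_left h]
  · rw [mul_zero, max_eq_right (not_le.1 h).le]

lemma mul_ite_pos_eq_max : y * (if 0 < y then (1 : ℝ) else 0) = max y 0 := by
  split_ifs with h
  · rw [mul_one, max_eq_left h.le]
  · rw [mul_zero, max_eq_right (not_lt.1 h)]

lemma mul_ite_neg_eq_min : y * (if y < 0 then (1 : ℝ) else 0) = min y 0 := by
  split_ifs with h
  · rw [mul_one, min_eq_left h.le]
  · rw [mul_zero, min_eq_right (not_lt.1 h)]

lemma mul_ite_nonpos_eq_min : y * (if y ≤ 0 then (1 : ℝ) else 0) = min y 0 := by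
  split_ifs with h
  · rw [mul_one, min_eq_left h]
  · rw [mul_zero, min_eq_right (not_le.1 h).le]

lemma sq_mul_ite_one_zero (p : Prop) [Decidable p] :
    y ^ 2 * (if p then (1 : ℝ) else 0) = (y * if p then 1 else 0) ^ 2 := by
  split_ifs <;> ring

end Indicators

section Reduction

open ProbabilityTheory

variable {Ω : Type*} [MeasurableSpace Ω] {μ : Measure Ω} {n : ℕ}
  {P : Ω → EuclideanSpace ℝ (Fin n)}

lemma Fminus_eq_Fplus (s ρ' γ ap am bp bm : ℝ) (K : EuclideanSpace ℝ (Fin n)) :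
    Fminus μ P s ρ' γ ap am bp bm K = Fplus μ P s ρ' (-γ) am ap bm bp K := by
  simp only [Fminus, Fplus, mul_assoc, sq_mul_ite_one_zero, mul_ite_nonneg_eq_max,
    mul_ite_pos_eq_max, mul_ite_neg_eq_min, mul_ite_nonpos_eq_min]
  ring

lemma Fplus_eq_hingeObjective [IsProbabilityMeasure μ] (hP : MemLp P 2 μ)
    (s ρ' γ ap am bp bm : ℝ) (K : EuclideanSpace ℝ (Fin n)) :
    Fplus μ P s ρ' γ ap am bp bm K = hingeObjective μ (ρ' + ap) (ρ' + am) (-γ)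
      (bp - ap ^ 2) (bm - am ^ 2) (fun ω => s + ⟪P ω, K⟫) := by
  have hX : MemLp (fun ω => ⟪P ω, K⟫) 2 μ := hP.inner_const K
  have hY := memLp_const_add_inner hP s K
  have hmean := integral_hinge hY 1 1
  have hsq := integral_hinge_sq hY 1 1
  simp only [hinge_one_one, one_mul, one_pow] at hmean hsq
  have hvar : ∫ ω, ⟪P ω, K⟫ ^ 2 ∂μ - (∫ ω, ⟪P ω, K⟫ ∂μ) ^ 2
      = ∫ ω, (s + ⟪P ω, K⟫) ^ 2 ∂μ - (∫ ω, s + ⟪P ω, K⟫ ∂μ) ^ 2 := by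
    have h := variance_const_add hX.1 s
    rw [variance_eq_sub hX, variance_eq_sub hY] at h
    exact h.symm
  have hshift : s + ∫ ω, ⟪P ω, K⟫ ∂μ = ∫ ω, s + ⟪P ω, K⟫ ∂μ := by
    rw [integral_add (integrable_const s) (hX.integrable one_le_two), integral_const,
      probReal_univ, one_smul]
  simp only [Fplus, hingeObjective, variance_eq_sub (hY.hinge _ _), Pi.pow_apply, mul_assoc,
    sq_mul_ite_one_zero, mul_ite_nonneg_eq_max, mul_ite_neg_eq_min, integral_const_mul]
  rw [integral_hinge hY, integral_hinge_sq hY, hvar, hshift, hmean, hsq]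
  ring

end Reduction

theorem Fplus_Fminus_attain_min_general {Ω : Type*} [MeasurableSpace Ω] (ℙ : Measure Ω)
    [IsProbabilityMeasure ℙ] {n : ℕ}
    (P : Ω → EuclideanSpace ℝ (Fin n)) (hmeas : Measurable P)
    (hL2 : Integrable (fun ω => ‖P ω‖ ^ 2) ℙ)
    (s ρ' γp γm ap am bp bm : ℝ)
    (htwosided : ∀ L : EuclideanSpace ℝ (Fin n), L ≠ 0 →
      0 < ℙ {ω | 0 < (inner ℝ (P ω) L : ℝ)} ∧ 0 < ℙ {ω | (inner ℝ (P ω) L : ℝ) < 0})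
    (hatomless : ∀ L : EuclideanSpace ℝ (Fin n), L ≠ 0 →
      ∀ c : ℝ, ℙ {ω | (inner ℝ (P ω) L : ℝ) = c} = 0)
    (hbp : ap ^ 2 ≤ bp) (hbm : am ^ 2 ≤ bm)
    (hne : (ρ' + ap, ρ' + am) ≠ ((0 : ℝ), (0 : ℝ))) :
    (∃ Kp : EuclideanSpace ℝ (Fin n), ∀ K : EuclideanSpace ℝ (Fin n),
        Fplus ℙ P s ρ' γp ap am bp bm Kp ≤ Fplus ℙ P s ρ' γp ap am bp bm K) ∧
    (∃ Km : EuclideanSpace ℝ (Fin n), ∀ K : EuclideanSpace ℝ (Fin n),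
        Fminus ℙ P s ρ' γm ap am bp bm Km ≤ Fminus ℙ P s ρ' γm ap am bp bm K) := by
  have hP : MemLp P 2 ℙ := (memLp_two_iff_integrable_sq_norm hmeas.aestronglyMeasurable).2 hL2
  have hcd : ρ' + ap ≠ 0 ∨ ρ' + am ≠ 0 := by
    contrapose! hne
    rw [hne.1, hne.2]
  obtain ⟨Kp, hKp⟩ := exists_forall_hingeObjective_le hP htwosided hatomless hcd (-γp)
    (sub_nonneg.2 hbp) (sub_nonneg.2 hbm) s
  obtain ⟨Km, hKm⟩ := exists_forall_hingeObjective_le hP htwosided hatomless hcd.symm γm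
    (sub_nonneg.2 hbm) (sub_nonneg.2 hbp) s
  refine ⟨⟨Kp, fun K => ?_⟩, ⟨Km, fun K => ?_⟩⟩
  · simpa only [Fplus_eq_hingeObjective hP] using hKp K
  · simpa only [Fminus_eq_Fplus, Fplus_eq_hingeObjective hP, neg_neg] using hKm K

/-- Under two-sidedness, directional atomlessness, `b⁺ ≥ (a⁺)²`, `b⁻ ≥ (a⁻)²`
and `(ρ'+a⁺, ρ'+a⁻) ≠ (0,0)`, both `F⁺` and `F⁻` attain a global minimum on `ℝⁿ`. -/
theorem Fplus_Fminus_attain_min {Ω : Type*} [MeasurableSpace Ω] (ℙ : Measure Ω)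
    [IsProbabilityMeasure ℙ] {n : ℕ} (hn : 1 ≤ n)
    (P : Ω → EuclideanSpace ℝ (Fin n)) (hmeas : Measurable P)
    (hL2 : Integrable (fun ω => ‖P ω‖ ^ 2) ℙ)
    (s ρ' γp γm ap am bp bm : ℝ) (hs : 0 < s) (hρ : 0 < ρ')
    (htwosided : ∀ L : EuclideanSpace ℝ (Fin n), L ≠ 0 →
      0 < ℙ {ω | 0 < (inner ℝ (P ω) L : ℝ)} ∧ 0 < ℙ {ω | (inner ℝ (P ω) L : ℝ) < 0})
    (hatomless : ∀ L : EuclideanSpace ℝ (Fin n), L ≠ 0 →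
      ∀ c : ℝ, ℙ {ω | (inner ℝ (P ω) L : ℝ) = c} = 0)
    (hbp : ap ^ 2 ≤ bp) (hbm : am ^ 2 ≤ bm)
    (hne : (ρ' + ap, ρ' + am) ≠ ((0 : ℝ), (0 : ℝ))) :
    (∃ Kp : EuclideanSpace ℝ (Fin n), ∀ K : EuclideanSpace ℝ (Fin n),
        Fplus ℙ P s ρ' γp ap am bp bm Kp ≤ Fplus ℙ P s ρ' γp ap am bp bm K) ∧
    (∃ Km : EuclideanSpace ℝ (Fin n), ∀ K : EuclideanSpace ℝ (Fin n),
        Fminus ℙ P s ρ' γm ap am bp bm Km ≤ Fminus ℙ P s ρ' γm ap am bp bm K) :=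
  Fplus_Fminus_attain_min_general ℙ P hmeas hL2 s ρ' γp γm ap am bp bm htwosided hatomless hbp hbm
    hne
end

section
/- For every Y > 0 and K ∈ ℝⁿ, taking u = K·Y (so Y' = (s+P'K)·Y), the random variables m and q are integrable and E[q] − (E[m])² − γ⁺Y·E[m] = Y²·F⁺(K). -/
open MeasureTheory

/-- The random variable `m = ρ'Y' + a⁺Y'·1{Y' ≥ 0} + a⁻Y'·1{Y' < 0}`,
where `Y' = sY + P'u`. -/
noncomputable def mRV {Ω : Type*} {n : ℕ} (P : Ω → EuclideanSpace ℝ (Fin n))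
    (s ρ' ap am : ℝ) (Y : ℝ) (u : EuclideanSpace ℝ (Fin n)) (ω : Ω) : ℝ :=
  let Y' : ℝ := s * Y + inner ℝ (P ω) u
  ρ' * Y' + ap * Y' * (if 0 ≤ Y' then (1:ℝ) else 0) +
    am * Y' * (if Y' < 0 then (1:ℝ) else 0)

/-- The random variable `q = ρ'²Y'² + (2ρ'a⁺+b⁺)Y'²·1{Y' ≥ 0} + (2ρ'a⁻+b⁻)Y'²·1{Y' < 0}`,
where `Y' = sY + P'u`. -/
noncomputable def qRV {Ω : Type*} {n : ℕ} (P : Ω → EuclideanSpace ℝ (Fin n))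
    (s ρ' ap am bp bm : ℝ) (Y : ℝ) (u : EuclideanSpace ℝ (Fin n)) (ω : Ω) : ℝ :=
  let Y' : ℝ := s * Y + inner ℝ (P ω) u
  ρ' ^ 2 * Y' ^ 2 + (2 * ρ' * ap + bp) * Y' ^ 2 * (if 0 ≤ Y' then (1:ℝ) else 0) +
    (2 * ρ' * am + bm) * Y' ^ 2 * (if Y' < 0 then (1:ℝ) else 0)

/-! Writing `t = s + ⟪P, K⟫`, the choice `u = Y • K` makes `Y' = Y * t`; since `Y > 0` the
indicators of `Y'` are those of `t`, so `m = Y * g(t)` and `q = Y² * h(t)` for piecewise-linear `g`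
and piecewise-quadratic `h`. Expanding the expectations term by term and using
`E[t²] = s² + 2s E[⟪P, K⟫] + E[⟪P, K⟫²]` turns the left-hand side into `Y² * F⁺(K)`. -/

section SignSplit

variable {Ω : Type*} [MeasurableSpace Ω] {μ : Measure Ω}

theorem MeasureTheory.Integrable.mul_ite_one {f : Ω → ℝ} (hf : Integrable f μ) {p : Ω → Prop}
    [DecidablePred p] (hp : MeasurableSet {ω | p ω}) :
    Integrable (fun ω => f ω * if p ω then 1 else 0) μ := by
  refine (hf.indicator hp).congr (Filter.Eventually.of_forall fun ω => ?_)
  simp [Set.indicator_apply]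

variable {f t : Ω → ℝ}

theorem integrable_signSplit (c₀ cp cm : ℝ) (hf : Integrable f μ) (ht : Measurable t) :
    Integrable (fun ω => c₀ * f ω + cp * f ω * (if 0 ≤ t ω then 1 else 0) +
      cm * f ω * (if t ω < 0 then 1 else 0)) μ :=
  ((hf.const_mul c₀).add ((hf.const_mul cp).mul_ite_one (measurableSet_le measurable_const ht))).add
    ((hf.const_mul cm).mul_ite_one (measurableSet_lt ht measurable_const))

theorem integral_signSplit (c₀ cp cm : ℝ) (hf : Integrable f μ) (ht : Measurable t) :
    ∫ ω, (c₀ * f ω + cp * f ω * (if 0 ≤ t ω then 1 else 0) +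
      cm * f ω * (if t ω < 0 then 1 else 0)) ∂μ =
    c₀ * ∫ ω, f ω ∂μ + ∫ ω, cp * f ω * (if 0 ≤ t ω then 1 else 0) ∂μ +
      ∫ ω, cm * f ω * (if t ω < 0 then 1 else 0) ∂μ := by
  rw [integral_add, integral_add, integral_const_mul]
  · exact hf.const_mul c₀
  · exact (hf.const_mul cp).mul_ite_one (measurableSet_le measurable_const ht)
  · exact (hf.const_mul c₀).add
      ((hf.const_mul cp).mul_ite_one (measurableSet_le measurable_const ht))
  · exact (hf.const_mul cm).mul_ite_one (measurableSet_lt ht measurable_const)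

theorem integral_const_add [IsProbabilityMeasure μ] (c : ℝ) (hf : Integrable f μ) :
    ∫ ω, (c + f ω) ∂μ = c + ∫ ω, f ω ∂μ := by
  rw [integral_add (integrable_const c) hf, integral_const, probReal_univ, one_smul]

theorem integral_const_add_sq [IsProbabilityMeasure μ] (c : ℝ) (hf : MemLp f 2 μ) :
    ∫ ω, (c + f ω) ^ 2 ∂μ = c ^ 2 + 2 * c * ∫ ω, f ω ∂μ + ∫ ω, f ω ^ 2 ∂μ := by
  have hf₁ : Integrable f μ := hf.integrable one_le_two
  have hlin : Integrable (fun ω => c ^ 2 + 2 * c * f ω) μ :=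
    (integrable_const _).add (hf₁.const_mul _)
  calc ∫ ω, (c + f ω) ^ 2 ∂μ = ∫ ω, (c ^ 2 + 2 * c * f ω + f ω ^ 2) ∂μ := by
        congr 1; ext ω; ring
    _ = c ^ 2 + 2 * c * ∫ ω, f ω ∂μ + ∫ ω, f ω ^ 2 ∂μ := by
        rw [integral_add hlin hf.integrable_sq,
          integral_const_add _ (hf₁.const_mul _), integral_const_mul]

end SignSplit

theorem ite_nonneg_mul_of_pos {Y : ℝ} (hY : 0 < Y) (x : ℝ) :
    (if 0 ≤ Y * x then (1 : ℝ) else 0) = if 0 ≤ x then 1 else 0 := by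
  simp only [mul_nonneg_iff_of_pos_left hY]

theorem ite_mul_neg_of_pos {Y : ℝ} (hY : 0 < Y) (x : ℝ) :
    (if Y * x < 0 then (1 : ℝ) else 0) = if x < 0 then 1 else 0 := by
  simp only [← not_le, mul_nonneg_iff_of_pos_left hY]

section Homogeneity

variable {Ω : Type*} {n : ℕ} (P : Ω → EuclideanSpace ℝ (Fin n)) {Y : ℝ}
  (K : EuclideanSpace ℝ (Fin n)) (ω : Ω)

theorem mRV_smul_of_pos (hY : 0 < Y) (s ρ' ap am : ℝ) :
    mRV P s ρ' ap am Y (Y • K) ω =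
      Y * (ρ' * (s + inner ℝ (P ω) K) +
        ap * (s + inner ℝ (P ω) K) * (if 0 ≤ s + inner ℝ (P ω) K then 1 else 0) +
        am * (s + inner ℝ (P ω) K) * (if s + inner ℝ (P ω) K < 0 then 1 else 0)) := by
  have hY' : s * Y + inner ℝ (P ω) (Y • K) = Y * (s + inner ℝ (P ω) K) := by
    rw [real_inner_smul_right]; ring
  simp only [mRV, hY', ite_nonneg_mul_of_pos hY, ite_mul_neg_of_pos hY]
  ring

theorem qRV_smul_of_pos (hY : 0 < Y) (s ρ' ap am bp bm : ℝ) :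
    qRV P s ρ' ap am bp bm Y (Y • K) ω =
      Y ^ 2 * (ρ' ^ 2 * (s + inner ℝ (P ω) K) ^ 2 +
        (2 * ρ' * ap + bp) * (s + inner ℝ (P ω) K) ^ 2 *
          (if 0 ≤ s + inner ℝ (P ω) K then 1 else 0) +
        (2 * ρ' * am + bm) * (s + inner ℝ (P ω) K) ^ 2 *
          (if s + inner ℝ (P ω) K < 0 then 1 else 0)) := by
  have hY' : s * Y + inner ℝ (P ω) (Y • K) = Y * (s + inner ℝ (P ω) K) := by
    rw [real_inner_smul_right]; ring
  simp only [qRV, hY', ite_nonneg_mul_of_pos hY, ite_mul_neg_of_pos hY]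
  ring

end Homogeneity

theorem cost_functional_eq_Fplus_general {Ω : Type*} [MeasurableSpace Ω] (ℙ : Measure Ω)
    [IsProbabilityMeasure ℙ] {n : ℕ}
    (P : Ω → EuclideanSpace ℝ (Fin n)) (hmeas : Measurable P)
    (hL2 : Integrable (fun ω => ‖P ω‖ ^ 2) ℙ)
    (s ρ' γp ap am bp bm : ℝ) :
    ∀ Y : ℝ, 0 < Y → ∀ K : EuclideanSpace ℝ (Fin n),
      Integrable (fun ω => mRV P s ρ' ap am Y (Y • K) ω) ℙ ∧
      Integrable (fun ω => qRV P s ρ' ap am bp bm Y (Y • K) ω) ℙ ∧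
      (∫ ω, qRV P s ρ' ap am bp bm Y (Y • K) ω ∂ℙ) -
        (∫ ω, mRV P s ρ' ap am Y (Y • K) ω ∂ℙ) ^ 2 -
        γp * Y * (∫ ω, mRV P s ρ' ap am Y (Y • K) ω ∂ℙ) =
      Y ^ 2 * Fplus ℙ P s ρ' γp ap am bp bm K := by
  intro Y hY K
  have hpk : MemLp (fun ω => inner ℝ (P ω) K) 2 ℙ :=
    ((memLp_two_iff_integrable_sq_norm hmeas.aestronglyMeasurable).2 hL2).inner_const K
  have ht : MemLp (fun ω => s + inner ℝ (P ω) K) 2 ℙ := (memLp_const s).add hpk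
  have htm : Measurable fun ω => s + inner ℝ (P ω) K :=
    measurable_const.add (hmeas.inner measurable_const)
  have hm := funext (mRV_smul_of_pos P K · hY s ρ' ap am)
  have hq := funext (qRV_smul_of_pos P K · hY s ρ' ap am bp bm)
  refine ⟨?_, ?_, ?_⟩
  · rw [hm]; exact (integrable_signSplit _ _ _ (ht.integrable one_le_two) htm).const_mul Y
  · rw [hq]; exact (integrable_signSplit _ _ _ ht.integrable_sq htm).const_mul (Y ^ 2)
  rw [hm, hq, integral_const_mul, integral_const_mul,
    integral_signSplit _ _ _ (ht.integrable one_le_two) htm,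
    integral_signSplit _ _ _ ht.integrable_sq htm,
    integral_const_add _ (hpk.integrable one_le_two), integral_const_add_sq _ hpk, Fplus]
  ring

/-- For `Y > 0` and `u = K·Y` (so `Y' = (s+P'K)·Y`), the random variables `m` and `q`
are integrable and `E[q] − (E[m])² − γ⁺Y·E[m] = Y²·F⁺(K)`. -/
theorem cost_functional_eq_Fplus {Ω : Type*} [MeasurableSpace Ω] (ℙ : Measure Ω)
    [IsProbabilityMeasure ℙ] {n : ℕ} (hn : 1 ≤ n)
    (P : Ω → EuclideanSpace ℝ (Fin n)) (hmeas : Measurable P)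
    (hL2 : Integrable (fun ω => ‖P ω‖ ^ 2) ℙ)
    (s ρ' γp ap am bp bm : ℝ) (hs : 0 < s) (hρ : 0 < ρ') :
    ∀ Y : ℝ, 0 < Y → ∀ K : EuclideanSpace ℝ (Fin n),
      Integrable (fun ω => mRV P s ρ' ap am Y (Y • K) ω) ℙ ∧
      Integrable (fun ω => qRV P s ρ' ap am bp bm Y (Y • K) ω) ℙ ∧
      (∫ ω, qRV P s ρ' ap am bp bm Y (Y • K) ω ∂ℙ) -
        (∫ ω, mRV P s ρ' ap am Y (Y • K) ω ∂ℙ) ^ 2 -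
        γp * Y * (∫ ω, mRV P s ρ' ap am Y (Y • K) ω ∂ℙ) =
      Y ^ 2 * Fplus ℙ P s ρ' γp ap am bp bm K :=
  cost_functional_eq_Fplus_general ℙ P hmeas hL2 s ρ' γp ap am bp bm
end

section
/- Let P : Ω → ℝⁿ be a random vector with E[‖P‖²] < ∞ whose covariance matrix Σ = E[PP'] − E[P]E[P'] is positive definite. Fix s > 0, W ∈ ℝ, γ⁺ ≥ 0, γ⁻ ≥ 0 and X ∈ ℝ, and define the behavioral risk aversion γ(X) = γ⁺·(X − s⁻¹W) if X ≥ s⁻¹W and γ(X) = −γ⁻·(X − s⁻¹W) if X < s⁻¹W. Then the function u ↦ Var(sX + P'u) − γ(X)·E[sX + P'u] on ℝⁿ has a unique global minimizer u* = (γ(X)/2)·Σ⁻¹E[P]; equivalently, u* = K⁺·(X − s⁻¹W)·1{X ≥ s⁻¹W} + K⁻·(X − s⁻¹W)·1{X < s⁻¹W}, where K⁺ = (γ⁺/2)·Σ⁻¹E[P] and K⁻ = −(γ⁻/2)·Σ⁻¹E[P]; in particular the optimal policy is a piecewise linear feedback of X with reference point at the discounted investment target s⁻¹W. -/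
/-!
Since `E[(sX + P'u)²] − E[sX + P'u]² = u'Σu` and `E[sX + P'u] = sX + u'E[P]`, the objective is
the quadratic `u'Σu − γ(X)·u'E[P] − γ(X)·sX`. With `u* = (γ(X)/2)·Σ⁻¹E[P]` we have
`Σu* = (γ(X)/2)·E[P]`, and completing the square gives `f u − f u* = (u − u*)'Σ(u − u*)`, which
is positive for `u ≠ u*` because `Σ` is positive definite. The feedback form of `u*` is a case
split on the sign of `X − s⁻¹W`.
-/

open MeasureTheory Matrix
open scoped InnerProductSpace

namespace Matrix

variable {ι R : Type*} [Fintype ι] [CommRing R] {A : Matrix ι ι R}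

theorem IsSymm.dotProduct_mulVec_comm (hA : A.IsSymm) (x y : ι → R) :
    x ⬝ᵥ A *ᵥ y = y ⬝ᵥ A *ᵥ x := by
  rw [dotProduct_mulVec, ← mulVec_transpose, hA.eq, dotProduct_comm]

theorem IsSymm.quadratic_sub_quadratic (hA : A.IsSymm) (x x₀ : ι → R) :
    (x ⬝ᵥ A *ᵥ x - 2 * x ⬝ᵥ A *ᵥ x₀) - (x₀ ⬝ᵥ A *ᵥ x₀ - 2 * x₀ ⬝ᵥ A *ᵥ x₀) =
      (x - x₀) ⬝ᵥ A *ᵥ (x - x₀) := by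
  simp only [mulVec_sub, sub_dotProduct, dotProduct_sub, hA.dotProduct_mulVec_comm x₀ x]
  ring

theorem PosDef.quadratic_lt_of_ne {A : Matrix ι ι ℝ} (hA : A.PosDef) {x x₀ b : ι → ℝ}
    (hb : A *ᵥ x₀ = b) (hx : x ≠ x₀) :
    x₀ ⬝ᵥ A *ᵥ x₀ - 2 * x₀ ⬝ᵥ b < x ⬝ᵥ A *ᵥ x - 2 * x ⬝ᵥ b := by
  subst hb
  have hpos := hA.dotProduct_mulVec_pos (sub_ne_zero.mpr hx)
  rw [star_trivial, ← (isHermitian_iff_isSymm.mp hA.isHermitian).quadratic_sub_quadratic] at hpos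
  linarith

end Matrix

namespace ProbabilityTheory

variable {Ω ι : Type*} [Fintype ι] [MeasurableSpace Ω]

noncomputable def covarianceMatrix (μ : Measure Ω) (P : Ω → EuclideanSpace ℝ ι) : Matrix ι ι ℝ :=
  of fun i j => cov[(P · i), (P · j); μ]

variable {μ : Measure Ω} [IsProbabilityMeasure μ] {P : Ω → EuclideanSpace ℝ ι}

theorem integral_const_add_inner (hP : Integrable P μ) (c : ℝ) (u : EuclideanSpace ℝ ι) :
    ∫ ω, c + ⟪P ω, u⟫_ℝ ∂μ = c + u ⬝ᵥ fun i => ∫ ω, P ω i ∂μ := by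
  have hPi := hP.eval_piLp
  simp_rw [EuclideanSpace.inner_eq_star_dotProduct, star_trivial, dotProduct]
  rw [integral_add (integrable_const c) (integrable_finsetSum _ fun i _ => (hPi i).const_mul _),
    integral_finsetSum _ fun i _ => (hPi i).const_mul _]
  simp [integral_const_mul]

theorem variance_const_add_inner (hP : MemLp P 2 μ) (c : ℝ) (u : EuclideanSpace ℝ ι) :
    Var[fun ω => c + ⟪P ω, u⟫_ℝ; μ] = u ⬝ᵥ covarianceMatrix μ P *ᵥ u := by
  have hPi := hP.eval_piLp
  rw [variance_const_add (hP.inner_const u).aestronglyMeasurable,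
    ← covariance_self (hP.inner_const u).aemeasurable]
  simp_rw [EuclideanSpace.inner_eq_star_dotProduct, star_trivial, dotProduct]
  rw [covariance_fun_sum_fun_sum (fun i => (hPi i).const_mul _) (fun i => (hPi i).const_mul _)]
  simp only [covariance_const_mul_left, covariance_const_mul_right, dotProduct, mulVec,
    covarianceMatrix, of_apply, Finset.mul_sum]
  refine Finset.sum_congr rfl fun i _ => Finset.sum_congr rfl fun j _ => ?_
  ring

theorem covarianceMatrix_eq_sub (hP : MemLp P 2 μ) :
    covarianceMatrix μ P =
      of fun i j => (∫ ω, P ω i * P ω j ∂μ) - (∫ ω, P ω i ∂μ) * ∫ ω, P ω j ∂μ := by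
  ext i j
  exact covariance_eq_sub (hP.eval_piLp i) (hP.eval_piLp j)

theorem meanVariance_objective_eq (hP : MemLp P 2 μ) (c γ : ℝ) (u : EuclideanSpace ℝ ι) :
    ((∫ ω, (c + ⟪P ω, u⟫_ℝ) ^ 2 ∂μ) - (∫ ω, c + ⟪P ω, u⟫_ℝ ∂μ) ^ 2) -
        γ * ∫ ω, c + ⟪P ω, u⟫_ℝ ∂μ =
      (u ⬝ᵥ covarianceMatrix μ P *ᵥ u - 2 * u ⬝ᵥ ((γ / 2) • fun i => ∫ ω, P ω i ∂μ)) - γ * c := by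
  have hY : MemLp (fun ω => c + ⟪P ω, u⟫_ℝ) 2 μ := (memLp_const c).add (hP.inner_const u)
  have hvar := variance_eq_sub hY
  simp only [Pi.pow_apply] at hvar
  rw [← hvar, variance_const_add_inner hP, integral_const_add_inner (hP.integrable one_le_two),
    dotProduct_smul, smul_eq_mul]
  ring

end ProbabilityTheory

theorem ite_smul_eq_indicator_feedback {E : Type*} [AddCommGroup E] [Module ℝ E]
    (a r γp γm : ℝ) (v : E) :
    ((if r ≤ a then γp * (a - r) else -γm * (a - r)) / 2) • v =
      ((a - r) * (if r ≤ a then (1:ℝ) else 0)) • ((γp / 2) • v) +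
        ((a - r) * (if a < r then (1:ℝ) else 0)) • -((γm / 2) • v) := by
  split_ifs with h₁ h₂ h₂
  · exact absurd h₂ (not_lt.mpr h₁)
  · module
  · module
  · exact absurd (lt_of_not_ge h₁) h₂

theorem one_period_behavioral_mean_variance_general {Ω : Type*} [MeasurableSpace Ω]
    (ℙ : Measure Ω) [IsProbabilityMeasure ℙ] {n : ℕ}
    (P : Ω → EuclideanSpace ℝ (Fin n)) (hmeas : Measurable P)
    (hL2 : Integrable (fun ω => ‖P ω‖ ^ 2) ℙ)
    (s : ℝ) (W X γp γm : ℝ)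
    (Sig : Matrix (Fin n) (Fin n) ℝ)
    (hSig : Sig = Matrix.of fun i j =>
      (∫ ω, P ω i * P ω j ∂ℙ) - (∫ ω, P ω i ∂ℙ) * (∫ ω, P ω j ∂ℙ))
    (hpd : Sig.PosDef) :
    let γX : ℝ := if s⁻¹ * W ≤ X then γp * (X - s⁻¹ * W) else -γm * (X - s⁻¹ * W)
    let f : EuclideanSpace ℝ (Fin n) → ℝ := fun u =>
      ((∫ ω, (s * X + inner ℝ (P ω) u : ℝ) ^ 2 ∂ℙ) -
        (∫ ω, (s * X + inner ℝ (P ω) u : ℝ) ∂ℙ) ^ 2) -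
      γX * (∫ ω, (s * X + inner ℝ (P ω) u : ℝ) ∂ℙ)
    let SinvEP : EuclideanSpace ℝ (Fin n) :=
      (EuclideanSpace.equiv (Fin n) ℝ).symm (Sig⁻¹.mulVec (fun i => ∫ ω, P ω i ∂ℙ))
    let ustar : EuclideanSpace ℝ (Fin n) := (γX / 2) • SinvEP
    let Kp : EuclideanSpace ℝ (Fin n) := (γp / 2) • SinvEP
    let Km : EuclideanSpace ℝ (Fin n) := -((γm / 2) • SinvEP)
    (∀ u : EuclideanSpace ℝ (Fin n), f ustar ≤ f u) ∧
      (∀ u : EuclideanSpace ℝ (Fin n), (∀ v, f u ≤ f v) → u = ustar) ∧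
      ustar = ((X - s⁻¹ * W) * (if s⁻¹ * W ≤ X then (1:ℝ) else 0)) • Kp +
        ((X - s⁻¹ * W) * (if X < s⁻¹ * W then (1:ℝ) else 0)) • Km := by
  intro γX f SinvEP ustar Kp Km
  have hP : MemLp P 2 ℙ := (memLp_two_iff_integrable_sq_norm hmeas.aestronglyMeasurable).mpr hL2
  set m : Fin n → ℝ := fun i => ∫ ω, P ω i ∂ℙ
  have hf : ∀ u, f u = (u ⬝ᵥ Sig *ᵥ u - 2 * u ⬝ᵥ ((γX / 2) • m)) - γX * (s * X) := by
    rw [hSig, ← ProbabilityTheory.covarianceMatrix_eq_sub hP]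
    exact ProbabilityTheory.meanVariance_objective_eq hP (s * X) γX
  have hustar : Sig *ᵥ ustar = (γX / 2) • m := by
    change Sig *ᵥ ((γX / 2) • Sig⁻¹ *ᵥ m) = _
    rw [mulVec_smul, mulVec_mulVec, mul_nonsing_inv Sig hpd.det_pos.ne'.isUnit, one_mulVec]
  have hlt : ∀ u, u ≠ ustar → f ustar < f u := fun u hu => by
    rw [hf, hf]
    linarith [hpd.quadratic_lt_of_ne hustar fun h => hu (WithLp.ofLp_injective 2 h)]
  refine ⟨fun u => ?_, fun u hu => ?_, ite_smul_eq_indicator_feedback X (s⁻¹ * W) γp γm SinvEP⟩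
  · rcases eq_or_ne u ustar with rfl | h
    exacts [le_rfl, (hlt u h).le]
  · by_contra h
    exact (hlt u h).not_ge (hu ustar)

/-- One-period mean-variance portfolio selection with behavioral risk aversion
`γ(X) = γ⁺(X − s⁻¹W)` if `X ≥ s⁻¹W` and `γ(X) = −γ⁻(X − s⁻¹W)` if `X < s⁻¹W`:
the function `u ↦ Var(sX + P'u) − γ(X)·E[sX + P'u]` has the unique global minimizer
`u* = (γ(X)/2)·Σ⁻¹E[P]`, which equals the piecewise linear feedback policy
`K⁺·(X − s⁻¹W)·1{X ≥ s⁻¹W} + K⁻·(X − s⁻¹W)·1{X < s⁻¹W}` with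
`K⁺ = (γ⁺/2)·Σ⁻¹E[P]` and `K⁻ = −(γ⁻/2)·Σ⁻¹E[P]`. -/
theorem one_period_behavioral_mean_variance {Ω : Type*} [MeasurableSpace Ω]
    (ℙ : Measure Ω) [IsProbabilityMeasure ℙ] {n : ℕ} (hn : 1 ≤ n)
    (P : Ω → EuclideanSpace ℝ (Fin n)) (hmeas : Measurable P)
    (hL2 : Integrable (fun ω => ‖P ω‖ ^ 2) ℙ)
    (s : ℝ) (hs : 0 < s) (W X γp γm : ℝ) (hγp : 0 ≤ γp) (hγm : 0 ≤ γm)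
    (Sig : Matrix (Fin n) (Fin n) ℝ)
    (hSig : Sig = Matrix.of fun i j =>
      (∫ ω, P ω i * P ω j ∂ℙ) - (∫ ω, P ω i ∂ℙ) * (∫ ω, P ω j ∂ℙ))
    (hpd : Sig.PosDef) :
    let γX : ℝ := if s⁻¹ * W ≤ X then γp * (X - s⁻¹ * W) else -γm * (X - s⁻¹ * W)
    let f : EuclideanSpace ℝ (Fin n) → ℝ := fun u =>
      ((∫ ω, (s * X + inner ℝ (P ω) u : ℝ) ^ 2 ∂ℙ) -
        (∫ ω, (s * X + inner ℝ (P ω) u : ℝ) ∂ℙ) ^ 2) -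
      γX * (∫ ω, (s * X + inner ℝ (P ω) u : ℝ) ∂ℙ)
    let SinvEP : EuclideanSpace ℝ (Fin n) :=
      (EuclideanSpace.equiv (Fin n) ℝ).symm (Sig⁻¹.mulVec (fun i => ∫ ω, P ω i ∂ℙ))
    let ustar : EuclideanSpace ℝ (Fin n) := (γX / 2) • SinvEP
    let Kp : EuclideanSpace ℝ (Fin n) := (γp / 2) • SinvEP
    let Km : EuclideanSpace ℝ (Fin n) := -((γm / 2) • SinvEP)
    (∀ u : EuclideanSpace ℝ (Fin n), f ustar ≤ f u) ∧
      (∀ u : EuclideanSpace ℝ (Fin n), (∀ v, f u ≤ f v) → u = ustar) ∧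
      ustar = ((X - s⁻¹ * W) * (if s⁻¹ * W ≤ X then (1:ℝ) else 0)) • Kp +
        ((X - s⁻¹ * W) * (if X < s⁻¹ * W then (1:ℝ) else 0)) • Km :=
  one_period_behavioral_mean_variance_general ℙ P hmeas hL2 s W X γp γm Sig hSig hpd
end
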